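/- arXiv:2412.14506 — 3 statements merged into one kernel-verified Lean document; each statement's English description precedes it below -/
import Mathlib

section
/- (Exact-gradient DOGD, Lipschitz case.) In the DOGD setting described below with exact gradient feedback r_t = ∇f_t(x_t) for all t ∈ [T], assume additionally that ‖∇f_t(x)‖ ≤ L for all x ∈ X and all t ∈ [T]. Then the dynamic regret of DOGD with constant step size η > 0 satisfies R^{NS}_T ≤ 2R²/(ηκ) + 3R V_T/(ηκ) + η L² T d/(2κ) + L(d−1) V_T/κ + 2η(d−1)L² T/κ. -/
/-!
The feedback of round `k` is used at round `k + d_k - 1`, so the iterates are projected gradient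
steps `x_{s+1} = P_X (x_s - η G_s)`, where `G_s` sums the gradients arriving at round `s`; there
are at most `d` of them and `T` in total. Quasar-convexity bounds the regret by
`κ⁻¹ ∑_t ⟪∇f_t(x_t), x_t - x*_t⟫`. Split each term at the arrival round `s` of its gradient, with
the comparator `u_s = x*_{s+1-d}` (clamped to `[1, T]`):
* `⟪∇f_t(x_t), x_s - u_s⟫` regroups into `⟪G_s, x_s - u_s⟫`, and the projected-gradient telescoping
  against the moving comparator `u_s` gives `(4R² + 4R V_T)/(2η) + (η/2) ∑_s ‖G_s‖²`;
* `⟪∇f_t(x_t), u_s - x*_t⟫ ≤ L ‖x*_t - u_s‖`, at most `L` times the path length of `x*` over a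
  window ending at `t`;
* `⟪∇f_t(x_t), x_t - x_s⟫ ≤ L ‖x_s - x_t‖`, at most `L` times the movement of the iterates over the
  window `[t, s]`, where each step moves by at most `η L` per arriving gradient.
All these windows have length at most `d - 1`, so each round lies in at most `d - 1` of them.
-/

open Finset RealInnerProductSpace

section Windows

variable {ι κ α : Type*}

theorem sum_sum_le_mul_sum_of_card_filter_le [DecidableEq κ] {s : Finset ι} {U : Finset κ}
    {W : ι → Finset κ} {w : κ → ℝ} {m : ℕ} (hW : ∀ i ∈ s, W i ⊆ U) (hw : ∀ j ∈ U, 0 ≤ w j)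
    (hm : ∀ j ∈ U, #{i ∈ s | j ∈ W i} ≤ m) :
    ∑ i ∈ s, ∑ j ∈ W i, w j ≤ m * ∑ j ∈ U, w j := by
  rw [sum_comm' (t' := U) (s' := fun j => {i ∈ s | j ∈ W i}) fun i j => ?_, mul_sum]
  · refine sum_le_sum fun j hj => ?_
    rw [sum_const, nsmul_eq_mul]
    exact mul_le_mul_of_nonneg_right (by exact_mod_cast hm j hj) (hw j hj)
  · rw [mem_filter]
    exact ⟨fun h => ⟨h, hW i h.1 h.2⟩, And.left⟩

variable [PseudoMetricSpace α]

theorem sum_dist_le_mul_sum_dist (y : ℕ → α) {s : Finset ι} {a b : ι → ℕ} {n₀ n₁ m : ℕ}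
    (hab : ∀ i ∈ s, a i ≤ b i) (ha : ∀ i ∈ s, n₀ ≤ a i) (hb : ∀ i ∈ s, b i ≤ n₁)
    (hm : ∀ j ∈ Ico n₀ n₁, #{i ∈ s | j ∈ Ico (a i) (b i)} ≤ m) :
    ∑ i ∈ s, dist (y (a i)) (y (b i)) ≤ m * ∑ j ∈ Ico n₀ n₁, dist (y j) (y (j + 1)) :=
  (sum_le_sum fun i hi => dist_le_Ico_sum_dist y (hab i hi)).trans <|
    sum_sum_le_mul_sum_of_card_filter_le (fun i hi => Ico_subset_Ico (ha i hi) (hb i hi))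
      (fun _ _ => dist_nonneg) hm

theorem sum_dist_comp_eq_of_succ (y : ℕ → α) {ν : ℕ → ℕ}
    (hν : ∀ s, ν (s + 1) = ν s ∨ ν (s + 1) = ν s + 1) {m n : ℕ} (hmn : m ≤ n) :
    ∑ s ∈ Ico m n, dist (y (ν s)) (y (ν (s + 1))) =
      ∑ j ∈ Ico (ν m) (ν n), dist (y j) (y (j + 1)) := by
  induction n, hmn using Nat.le_induction with
  | base => simp
  | succ n hmn ih =>
    have hmono : ν m ≤ ν n :=
      monotone_nat_of_le_succ (fun s => by rcases hν s with h | h <;> omega) hmn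
    rw [sum_Ico_succ_top hmn, ih]
    rcases hν n with h | h
    · rw [h, dist_self, add_zero]
    · rw [h, sum_Ico_succ_top hmono]

end Windows

section Telescoping

variable {E : Type*} [SeminormedAddCommGroup E] {R : ℝ}

theorem sq_norm_sub_sub_sq_norm_sub_le {a u v : E} (ha : ‖a‖ ≤ R) (hu : ‖u‖ ≤ R)
    (hv : ‖v‖ ≤ R) : ‖a - v‖ ^ 2 - ‖a - u‖ ^ 2 ≤ 4 * R * dist u v := by
  have hdiff : ‖a - v‖ - ‖a - u‖ ≤ dist u v := by
    simpa [dist_eq_norm] using norm_sub_norm_le (a - v) (a - u)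
  have hsum : ‖a - v‖ + ‖a - u‖ ≤ 4 * R := by
    linarith [norm_sub_le a v, norm_sub_le a u]
  nlinarith [mul_nonneg (sub_nonneg.2 hdiff) (add_nonneg (norm_nonneg (a - v))
    (norm_nonneg (a - u))), mul_nonneg (dist_nonneg (x := u) (y := v)) (sub_nonneg.2 hsum)]

theorem sum_sq_norm_sub_sub_le {x u : ℕ → E} {m n : ℕ} (hmn : m ≤ n)
    (hx : ∀ s ∈ Icc m n, ‖x s‖ ≤ R) (hu : ∀ s ∈ Icc m n, ‖u s‖ ≤ R) :
    ∑ s ∈ Ico m n, (‖x s - u s‖ ^ 2 - ‖x (s + 1) - u s‖ ^ 2) ≤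
      4 * R ^ 2 + 4 * R * ∑ s ∈ Ico m n, dist (u s) (u (s + 1)) := by
  have hstep : ∀ s ∈ Ico m n, ‖x s - u s‖ ^ 2 - ‖x (s + 1) - u s‖ ^ 2 ≤
      (‖x s - u s‖ ^ 2 - ‖x (s + 1) - u (s + 1)‖ ^ 2) + 4 * R * dist (u s) (u (s + 1)) := by
    intro s hs
    rw [mem_Ico] at hs
    have := sq_norm_sub_sub_sq_norm_sub_le (hx (s + 1) (mem_Icc.2 ⟨by omega, hs.2⟩))
      (hu s (mem_Icc.2 ⟨hs.1, hs.2.le⟩)) (hu (s + 1) (mem_Icc.2 ⟨by omega, hs.2⟩))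
    linarith
  have htele : ∑ s ∈ Ico m n, (‖x s - u s‖ ^ 2 - ‖x (s + 1) - u (s + 1)‖ ^ 2) =
      ‖x m - u m‖ ^ 2 - ‖x n - u n‖ ^ 2 := by
    rw [← neg_sub, ← sum_Ico_sub (fun s => ‖x s - u s‖ ^ 2) hmn, ← sum_neg_distrib]
    simp only [neg_sub]
  have hstart : ‖x m - u m‖ ≤ 2 * R := by
    have hm := left_mem_Icc.2 hmn
    linarith [norm_sub_le (x m) (u m), hx m hm, hu m hm]
  calc ∑ s ∈ Ico m n, (‖x s - u s‖ ^ 2 - ‖x (s + 1) - u s‖ ^ 2)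
      ≤ ∑ s ∈ Ico m n, ((‖x s - u s‖ ^ 2 - ‖x (s + 1) - u (s + 1)‖ ^ 2) +
          4 * R * dist (u s) (u (s + 1))) := sum_le_sum hstep
    _ = ‖x m - u m‖ ^ 2 - ‖x n - u n‖ ^ 2 + 4 * R * ∑ s ∈ Ico m n, dist (u s) (u (s + 1)) := by
      rw [sum_add_distrib, htele, mul_sum]
    _ ≤ 4 * R ^ 2 + 4 * R * ∑ s ∈ Ico m n, dist (u s) (u (s + 1)) := by
      nlinarith [norm_nonneg (x m - u m), sq_nonneg ‖x n - u n‖]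

end Telescoping

section NearestPoint

variable {F : Type*} [NormedAddCommGroup F] {X : Set F} {η : ℝ}

def IsNearestPoint (X : Set F) (y P : F) : Prop :=
  P ∈ X ∧ ∀ z ∈ X, ‖P - y‖ ≤ ‖z - y‖

theorem isNearestPoint_self {y : F} (hy : y ∈ X) : IsNearestPoint X y y :=
  ⟨hy, fun z _ => by simp⟩

theorem isNearestPoint_of_lazy_update {x y : ℕ → F} {P : ℕ → Prop} (hx₁ : x 1 ∈ X)
    (hupd : ∀ t, 1 ≤ t →
      (P t → IsNearestPoint X (y t) (x (t + 1))) ∧ (¬ P t → x (t + 1) = x t))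
    (hy : ∀ t, ¬ P t → y t = x t) :
    (∀ t, 1 ≤ t → x t ∈ X) ∧ ∀ t, 1 ≤ t → IsNearestPoint X (y t) (x (t + 1)) := by
  have hmem : ∀ t, 1 ≤ t → x t ∈ X := by
    intro t ht
    induction t, ht using Nat.le_induction with
    | base => exact hx₁
    | succ t ht ih =>
      by_cases h : P t
      · exact ((hupd t ht).1 h).1
      · rwa [(hupd t ht).2 h]
  refine ⟨hmem, fun t ht => ?_⟩
  by_cases h : P t
  · exact (hupd t ht).1 h
  · rw [(hupd t ht).2 h, hy t h]
    exact isNearestPoint_self (hmem t ht)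

variable [InnerProductSpace ℝ F]

theorem IsNearestPoint.sq_norm_sub_le (hX : Convex ℝ X) {y P u : F}
    (hP : IsNearestPoint X y P) (hu : u ∈ X) : ‖P - u‖ ^ 2 ≤ ‖y - u‖ ^ 2 := by
  have : Nonempty X := ⟨⟨P, hP.1⟩⟩
  have hinf : ‖y - P‖ = ⨅ w : X, ‖y - w‖ :=
    le_antisymm (le_ciInf fun w => by simpa only [norm_sub_rev y] using hP.2 w w.2)
      (ciInf_le (f := fun w : X => ‖y - w‖)
        ⟨0, Set.forall_mem_range.2 fun _ => norm_nonneg _⟩ ⟨P, hP.1⟩)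
  have hobtuse := (norm_eq_iInf_iff_real_inner_le_zero hX hP.1).1 hinf u hu
  rw [show y - u = (y - P) - (u - P) by abel, norm_sub_sq_real (y - P), norm_sub_rev P u]
  nlinarith [sq_nonneg ‖y - P‖]

theorem IsNearestPoint.inner_le (hX : Convex ℝ X) (hη : 0 < η) {x G P u : F}
    (hP : IsNearestPoint X (x - η • G) P) (hu : u ∈ X) :
    ⟪G, x - u⟫ ≤ (‖x - u‖ ^ 2 - ‖P - u‖ ^ 2) / (2 * η) + η / 2 * ‖G‖ ^ 2 := by
  have h := hP.sq_norm_sub_le hX hu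
  rw [show x - η • G - u = (x - u) - η • G by abel, norm_sub_sq_real (x - u),
    real_inner_smul_right, norm_smul, Real.norm_of_nonneg hη.le, real_inner_comm] at h
  rw [div_add' _ _ _ (by positivity), le_div_iff₀ (by positivity)]
  nlinarith

theorem IsNearestPoint.norm_sub_le (hX : Convex ℝ X) (hη : 0 ≤ η) {x G P : F}
    (hP : IsNearestPoint X (x - η • G) P) (hx : x ∈ X) : ‖P - x‖ ≤ η * ‖G‖ := by
  have h := hP.sq_norm_sub_le hX hx
  rw [sub_sub_cancel_left, norm_neg, norm_smul, Real.norm_of_nonneg hη] at h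
  exact (pow_le_pow_iff_left₀ (norm_nonneg _) (by positivity) two_ne_zero).1 h

theorem sum_inner_sub_le_mul_sum_dist {ι : Type*} {s : Finset ι} {g a b : ι → F} {L : ℝ}
    (hg : ∀ i ∈ s, ‖g i‖ ≤ L) : ∑ i ∈ s, ⟪g i, a i - b i⟫ ≤ L * ∑ i ∈ s, dist (a i) (b i) := by
  rw [mul_sum]
  refine sum_le_sum fun i hi => ?_
  rw [dist_eq_norm]
  exact (real_inner_le_norm _ _).trans (mul_le_mul_of_nonneg_right (hg i hi) (norm_nonneg _))

end NearestPoint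

namespace DOGD

variable {T d : ℕ} {dl : ℕ → ℕ}

def arrivals (T : ℕ) (dl : ℕ → ℕ) (s : ℕ) : Finset ℕ :=
  {k ∈ Icc 1 T | k + dl k - 1 = s}

theorem mem_arrivals {k s : ℕ} : k ∈ arrivals T dl s ↔ k ∈ Icc 1 T ∧ k + dl k - 1 = s :=
  mem_filter

theorem sum_sum_arrivals {M : Type*} [AddCommMonoid M] (hdl : ∀ t ∈ Icc 1 T, dl t ∈ Icc 1 d)
    (w : ℕ → M) : ∑ s ∈ Ico 1 (T + d), ∑ k ∈ arrivals T dl s, w k = ∑ k ∈ Icc 1 T, w k := by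
  refine sum_fiberwise_of_maps_to (fun k hk => ?_) w
  have := mem_Icc.1 (hdl k hk)
  rw [mem_Icc] at hk
  rw [mem_Ico]
  omega

theorem sum_card_arrivals (hdl : ∀ t ∈ Icc 1 T, dl t ∈ Icc 1 d) :
    ∑ s ∈ Ico 1 (T + d), (#(arrivals T dl s) : ℝ) = T := by
  simpa using sum_sum_arrivals hdl fun _ => (1 : ℝ)

theorem card_arrivals_le (hdl : ∀ t ∈ Icc 1 T, dl t ∈ Icc 1 d) (s : ℕ) :
    #(arrivals T dl s) ≤ d := by
  calc #(arrivals T dl s) ≤ #(Ioc (s - d) s) := card_le_card fun k hk => ?_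
    _ ≤ d := by rw [Nat.card_Ioc]; omega
  obtain ⟨hkT, rfl⟩ := mem_arrivals.1 hk
  have := mem_Icc.1 (hdl k hkT)
  have := mem_Icc.1 hkT
  rw [mem_Ioc]
  omega

/-- The oldest round, clamped to `[1, T]`, whose feedback can arrive at round `s`; its minimiser
is the comparator at round `s`. -/
def oldestRound (T d s : ℕ) : ℕ :=
  min T (max 1 (s + 1 - d))

theorem sum_dist_oldestRound {α : Type*} [PseudoMetricSpace α] (hT : 1 ≤ T) (hd : 1 ≤ d)
    (y : ℕ → α) :
    ∑ s ∈ Ico 1 (T + d), dist (y (oldestRound T d s)) (y (oldestRound T d (s + 1))) =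
      ∑ j ∈ Ico 1 T, dist (y j) (y (j + 1)) := by
  rw [sum_dist_comp_eq_of_succ y (fun s => by unfold oldestRound; omega) (by omega)]
  congr 2 <;> unfold oldestRound <;> omega

variable {F : Type*} [NormedAddCommGroup F] {X : Set F} {R L η : ℝ} {g x xs : ℕ → F}

theorem norm_sum_arrivals_le (hg : ∀ t ∈ Icc 1 T, ‖g t‖ ≤ L) (s : ℕ) :
    ‖∑ k ∈ arrivals T dl s, g k‖ ≤ #(arrivals T dl s) * L := by
  simpa using norm_sum_le_of_le _ fun k hk => hg k (mem_arrivals.1 hk).1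

theorem sum_sq_norm_sum_arrivals_le (hdl : ∀ t ∈ Icc 1 T, dl t ∈ Icc 1 d)
    (hg : ∀ t ∈ Icc 1 T, ‖g t‖ ≤ L) :
    ∑ s ∈ Ico 1 (T + d), ‖∑ k ∈ arrivals T dl s, g k‖ ^ 2 ≤ L ^ 2 * d * T := by
  calc ∑ s ∈ Ico 1 (T + d), ‖∑ k ∈ arrivals T dl s, g k‖ ^ 2
      ≤ ∑ s ∈ Ico 1 (T + d), L ^ 2 * d * #(arrivals T dl s) := sum_le_sum fun s _ => by
        have hcard : (#(arrivals T dl s) : ℝ) ≤ d := by exact_mod_cast card_arrivals_le hdl s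
        calc ‖∑ k ∈ arrivals T dl s, g k‖ ^ 2 ≤ (#(arrivals T dl s) * L) ^ 2 :=
              pow_le_pow_left₀ (norm_nonneg _) (norm_sum_arrivals_le hg s) 2
          _ ≤ L ^ 2 * d * #(arrivals T dl s) := by
              nlinarith [mul_nonneg (sq_nonneg L) (Nat.cast_nonneg (α := ℝ) #(arrivals T dl s))]
    _ = L ^ 2 * d * T := by rw [← mul_sum, sum_card_arrivals hdl]

variable [InnerProductSpace ℝ F]

theorem sum_inner_eq_sum_arrivals (hdl : ∀ t ∈ Icc 1 T, dl t ∈ Icc 1 d) (y : ℕ → F) :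
    ∑ t ∈ Icc 1 T, ⟪g t, y (t + dl t - 1)⟫ =
      ∑ s ∈ Ico 1 (T + d), ⟪∑ k ∈ arrivals T dl s, g k, y s⟫ := by
  rw [← sum_sum_arrivals hdl]
  refine sum_congr rfl fun s _ => ?_
  rw [sum_inner]
  exact sum_congr rfl fun k hk => by rw [(mem_arrivals.1 hk).2]

theorem sum_inner_sub_oldestRound_le (hX : Convex ℝ X) (hXR : ∀ z ∈ X, ‖z‖ ≤ R) (hT : 1 ≤ T)
    (hd : 1 ≤ d) (hdl : ∀ t ∈ Icc 1 T, dl t ∈ Icc 1 d) (hg : ∀ t ∈ Icc 1 T, ‖g t‖ ≤ L)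
    (hxs : ∀ t ∈ Icc 1 T, xs t ∈ X) (hη : 0 < η) (hx : ∀ s, 1 ≤ s → x s ∈ X)
    (hstep : ∀ s, 1 ≤ s → IsNearestPoint X (x s - η • ∑ k ∈ arrivals T dl s, g k) (x (s + 1))) :
    ∑ s ∈ Ico 1 (T + d), ⟪∑ k ∈ arrivals T dl s, g k, x s - xs (oldestRound T d s)⟫ ≤
      (2 * R ^ 2 + 2 * R * ∑ j ∈ Ico 1 T, dist (xs j) (xs (j + 1))) / η +
        η * L ^ 2 * d * T / 2 := by
  set u := fun s => xs (oldestRound T d s)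
  have hu : ∀ s, u s ∈ X := fun s => hxs _ (by simp only [mem_Icc, oldestRound]; omega)
  have htele := sum_sq_norm_sub_sub_le (m := 1) (n := T + d) (by omega)
    (fun s hs => hXR _ (hx s (mem_Icc.1 hs).1)) (fun s _ => hXR _ (hu s))
  rw [sum_dist_oldestRound hT hd] at htele
  calc ∑ s ∈ Ico 1 (T + d), ⟪∑ k ∈ arrivals T dl s, g k, x s - u s⟫
      ≤ ∑ s ∈ Ico 1 (T + d), ((‖x s - u s‖ ^ 2 - ‖x (s + 1) - u s‖ ^ 2) / (2 * η) +
          η / 2 * ‖∑ k ∈ arrivals T dl s, g k‖ ^ 2) :=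
        sum_le_sum fun s hs => (hstep s (mem_Ico.1 hs).1).inner_le hX hη (hu s)
    _ = (∑ s ∈ Ico 1 (T + d), (‖x s - u s‖ ^ 2 - ‖x (s + 1) - u s‖ ^ 2)) / (2 * η) +
          η / 2 * ∑ s ∈ Ico 1 (T + d), ‖∑ k ∈ arrivals T dl s, g k‖ ^ 2 := by
        rw [sum_add_distrib, sum_div, mul_sum]
    _ ≤ (4 * R ^ 2 + 4 * R * ∑ j ∈ Ico 1 T, dist (xs j) (xs (j + 1))) / (2 * η) +
          η / 2 * (L ^ 2 * d * T) := by
        gcongr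
        exact sum_sq_norm_sum_arrivals_le hdl hg
    _ = _ := by field_simp; ring

theorem sum_inner_oldestRound_sub_le (hd : 1 ≤ d) (hdl : ∀ t ∈ Icc 1 T, dl t ∈ Icc 1 d)
    (hg : ∀ t ∈ Icc 1 T, ‖g t‖ ≤ L) (hL : 0 ≤ L) :
    ∑ t ∈ Icc 1 T, ⟪g t, xs (oldestRound T d (t + dl t - 1)) - xs t⟫ ≤
      L * (d - 1) * ∑ j ∈ Ico 1 T, dist (xs j) (xs (j + 1)) := by
  have hwindows := sum_dist_le_mul_sum_dist xs (s := Icc 1 T) (m := d - 1)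
    (a := fun t => oldestRound T d (t + dl t - 1)) (b := id) (n₀ := 1) (n₁ := T)
    (fun t ht => by
      have := mem_Icc.1 (hdl t ht); have := mem_Icc.1 ht
      simp only [oldestRound, id_eq]; omega)
    (fun t ht => by have := mem_Icc.1 ht; simp only [oldestRound]; omega)
    (fun t ht => (mem_Icc.1 ht).2)
    (fun j hj => (card_le_card (t := Ioc j (j + d - 1)) fun t ht => by
      simp only [mem_filter, mem_Ico, id_eq] at ht hj
      have := mem_Icc.1 (hdl t ht.1); have := mem_Icc.1 ht.1
      simp only [oldestRound] at ht
      rw [mem_Ioc]; omega).trans (by rw [Nat.card_Ioc]; omega))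
  rw [Nat.cast_pred hd] at hwindows
  calc ∑ t ∈ Icc 1 T, ⟪g t, xs (oldestRound T d (t + dl t - 1)) - xs t⟫
      ≤ L * ∑ t ∈ Icc 1 T, dist (xs (oldestRound T d (t + dl t - 1))) (xs t) :=
        sum_inner_sub_le_mul_sum_dist hg
    _ ≤ L * ((d - 1) * ∑ j ∈ Ico 1 T, dist (xs j) (xs (j + 1))) := by gcongr; exact hwindows
    _ = _ := by ring

theorem sum_dist_succ_le (hX : Convex ℝ X) (hdl : ∀ t ∈ Icc 1 T, dl t ∈ Icc 1 d)
    (hg : ∀ t ∈ Icc 1 T, ‖g t‖ ≤ L) (hη : 0 ≤ η) (hx : ∀ s, 1 ≤ s → x s ∈ X)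
    (hstep : ∀ s, 1 ≤ s → IsNearestPoint X (x s - η • ∑ k ∈ arrivals T dl s, g k) (x (s + 1))) :
    ∑ s ∈ Ico 1 (T + d), dist (x s) (x (s + 1)) ≤ η * L * T := by
  calc ∑ s ∈ Ico 1 (T + d), dist (x s) (x (s + 1))
      ≤ ∑ s ∈ Ico 1 (T + d), η * (#(arrivals T dl s) * L) := sum_le_sum fun s hs => by
        have hs1 := (mem_Ico.1 hs).1
        rw [dist_comm, dist_eq_norm]
        exact ((hstep s hs1).norm_sub_le hX hη (hx s hs1)).trans
          (mul_le_mul_of_nonneg_left (norm_sum_arrivals_le hg s) hη)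
    _ = η * L * T := by rw [← mul_sum, ← sum_mul, sum_card_arrivals hdl]; ring

theorem sum_inner_sub_arrival_le (hX : Convex ℝ X) (hd : 1 ≤ d)
    (hdl : ∀ t ∈ Icc 1 T, dl t ∈ Icc 1 d) (hg : ∀ t ∈ Icc 1 T, ‖g t‖ ≤ L) (hL : 0 ≤ L)
    (hη : 0 ≤ η) (hx : ∀ s, 1 ≤ s → x s ∈ X)
    (hstep : ∀ s, 1 ≤ s → IsNearestPoint X (x s - η • ∑ k ∈ arrivals T dl s, g k) (x (s + 1))) :
    ∑ t ∈ Icc 1 T, ⟪g t, x t - x (t + dl t - 1)⟫ ≤ η * L ^ 2 * (d - 1) * T := by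
  have hwindows := sum_dist_le_mul_sum_dist x (s := Icc 1 T) (m := d - 1)
    (a := id) (b := fun t => t + dl t - 1) (n₀ := 1) (n₁ := T + d)
    (fun t ht => by have := mem_Icc.1 (hdl t ht); simp only [id_eq]; omega)
    (fun t ht => (mem_Icc.1 ht).1)
    (fun t ht => by have := mem_Icc.1 (hdl t ht); have := mem_Icc.1 ht; omega)
    (fun j _ => (card_le_card (t := Ioc (j + 1 - d) j) fun t ht => by
      simp only [mem_filter, mem_Ico, id_eq] at ht
      have := mem_Icc.1 (hdl t ht.1); have := mem_Icc.1 ht.1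
      rw [mem_Ioc]; omega).trans (by rw [Nat.card_Ioc]; omega))
  rw [Nat.cast_pred hd] at hwindows
  calc ∑ t ∈ Icc 1 T, ⟪g t, x t - x (t + dl t - 1)⟫
      ≤ L * ∑ t ∈ Icc 1 T, dist (x t) (x (t + dl t - 1)) := sum_inner_sub_le_mul_sum_dist hg
    _ ≤ L * ((d - 1) * (η * L * T)) := by
        have hd' : (0 : ℝ) ≤ d - 1 := sub_nonneg.2 (by exact_mod_cast hd)
        gcongr
        exact hwindows.trans
          (mul_le_mul_of_nonneg_left (sum_dist_succ_le hX hdl hg hη hx hstep) hd')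
    _ = _ := by ring

theorem sum_inner_sub_le (hX : Convex ℝ X) (hXR : ∀ z ∈ X, ‖z‖ ≤ R) (hT : 1 ≤ T) (hd : 1 ≤ d)
    (hdl : ∀ t ∈ Icc 1 T, dl t ∈ Icc 1 d) (hg : ∀ t ∈ Icc 1 T, ‖g t‖ ≤ L) (hL : 0 ≤ L)
    (hxs : ∀ t ∈ Icc 1 T, xs t ∈ X) (hη : 0 < η) (hx : ∀ s, 1 ≤ s → x s ∈ X)
    (hstep : ∀ s, 1 ≤ s → IsNearestPoint X (x s - η • ∑ k ∈ arrivals T dl s, g k) (x (s + 1))) :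
    ∑ t ∈ Icc 1 T, ⟪g t, x t - xs t⟫ ≤
      (2 * R ^ 2 + 2 * R * ∑ j ∈ Ico 1 T, dist (xs j) (xs (j + 1))) / η
        + η * L ^ 2 * d * T / 2 + L * (d - 1) * ∑ j ∈ Ico 1 T, dist (xs j) (xs (j + 1))
        + η * L ^ 2 * (d - 1) * T := by
  have hsplit : ∀ t, ⟪g t, x t - xs t⟫ =
      ⟪g t, x (t + dl t - 1) - xs (oldestRound T d (t + dl t - 1))⟫ +
        ⟪g t, xs (oldestRound T d (t + dl t - 1)) - xs t⟫ + ⟪g t, x t - x (t + dl t - 1)⟫ :=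
    fun t => by rw [← inner_add_right, ← inner_add_right]; congr 1; abel
  have hregroup := sum_inner_eq_sum_arrivals (g := g) hdl fun s => x s - xs (oldestRound T d s)
  rw [sum_congr rfl fun t _ => hsplit t, sum_add_distrib, sum_add_distrib, hregroup]
  linarith [sum_inner_sub_oldestRound_le hX hXR hT hd hdl hg hxs hη hx hstep,
    sum_inner_oldestRound_sub_le (xs := xs) hd hdl hg hL,
    sum_inner_sub_arrival_le hX hd hdl hg hL hη.le hx hstep]

end DOGD

theorem dogd_exact_dynamic_regret_lipschitz_general
    (p T : ℕ) (hT : 1 ≤ T)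
    (X : Set (EuclideanSpace ℝ (Fin p)))
    (hXconv : Convex ℝ X)
    (R : ℝ) (hR : 0 < R) (hXR : ∀ z ∈ X, ‖z‖ ≤ R)
    (f : ℕ → EuclideanSpace ℝ (Fin p) → ℝ)
    (xs : ℕ → EuclideanSpace ℝ (Fin p))
    (hxs : ∀ t ∈ Finset.Icc 1 T, xs t ∈ X ∧ ∀ z ∈ X, f t (xs t) ≤ f t z)
    (κ : ℝ) (hκ0 : 0 < κ)
    (hqc : ∀ t ∈ Finset.Icc 1 T, ∀ z ∈ X,
      f t z + (1/κ) * ⟪gradient (f t) z, xs t - z⟫ ≤ f t (xs t))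
    (dl : ℕ → ℕ) (hdl : ∀ t ∈ Finset.Icc 1 T, 1 ≤ dl t)
    (d : ℕ) (hdub : ∀ t ∈ Finset.Icc 1 T, dl t ≤ d)
    (x : ℕ → EuclideanSpace ℝ (Fin p))
    (η : ℝ) (hη : 0 < η)
    (hx1 : x 1 ∈ X)
    (hupd : ∀ t : ℕ, 1 ≤ t →
      (((Finset.Icc 1 T).filter fun k => k + dl k - 1 = t).Nonempty →
        x (t+1) ∈ X ∧ ∀ z ∈ X,
          ‖x (t+1) - (x t - η • ∑ k ∈ (Finset.Icc 1 T).filter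
              (fun k => k + dl k - 1 = t), gradient (f k) (x k))‖ ≤
          ‖z - (x t - η • ∑ k ∈ (Finset.Icc 1 T).filter
              (fun k => k + dl k - 1 = t), gradient (f k) (x k))‖) ∧
      (¬ ((Finset.Icc 1 T).filter fun k => k + dl k - 1 = t).Nonempty →
        x (t+1) = x t))
    (L : ℝ) (hL : ∀ t ∈ Finset.Icc 1 T, ∀ z ∈ X, ‖gradient (f t) z‖ ≤ L) :
    ∑ t ∈ Finset.Icc 1 T, (f t (x t) - f t (xs t)) ≤
      2 * R^2 / (η * κ)
      + 3 * R * (∑ t ∈ Finset.Icc 1 (T - 1), ‖xs (t+1) - xs t‖) / (η * κ)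
      + η * L^2 * (T : ℝ) * (d : ℝ) / (2 * κ)
      + L * ((d : ℝ) - 1) * (∑ t ∈ Finset.Icc 1 (T - 1), ‖xs (t+1) - xs t‖) / κ
      + 2 * η * ((d : ℝ) - 1) * L^2 * (T : ℝ) / κ := by
  have h1 : 1 ∈ Icc 1 T := left_mem_Icc.2 hT
  have hd : 1 ≤ d := (hdl 1 h1).trans (hdub 1 h1)
  have hL0 : 0 ≤ L := (norm_nonneg _).trans (hL 1 h1 (x 1) hx1)
  have hdelay : ∀ t ∈ Icc 1 T, dl t ∈ Icc 1 d := fun t ht => mem_Icc.2 ⟨hdl t ht, hdub t ht⟩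
  obtain ⟨hxX, hstep⟩ := isNearestPoint_of_lazy_update
    (y := fun t => x t - η • ∑ k ∈ DOGD.arrivals T dl t, gradient (f k) (x k)) hx1 hupd
    fun t ht => by simp [DOGD.arrivals, not_nonempty_iff_eq_empty.1 ht]
  have hregret : ∑ t ∈ Icc 1 T, (f t (x t) - f t (xs t)) ≤
      (∑ t ∈ Icc 1 T, ⟪gradient (f t) (x t), x t - xs t⟫) / κ := by
    rw [sum_div]
    refine sum_le_sum fun t ht => ?_
    have := hqc t ht (x t) (hxX t (mem_Icc.1 ht).1)
    rw [← neg_sub, inner_neg_right, one_div, mul_neg] at this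
    rw [div_eq_inv_mul]
    linarith
  have hlin := DOGD.sum_inner_sub_le hXconv hXR hT hd hdelay
    (fun t ht => hL t ht _ (hxX t (mem_Icc.1 ht).1)) hL0 (fun t ht => (hxs t ht).1) hη hxX hstep
  have hV : ∑ t ∈ Icc 1 (T - 1), ‖xs (t + 1) - xs t‖ = ∑ j ∈ Ico 1 T, dist (xs j) (xs (j + 1)) :=
    sum_congr (by ext; simp; omega) fun j _ => by rw [dist_comm, dist_eq_norm]
  set V := ∑ j ∈ Ico 1 T, dist (xs j) (xs (j + 1))
  have hslack : 0 ≤ (R * V / η + η * (d - 1) * L ^ 2 * T) / κ := by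
    have hd' : (0 : ℝ) ≤ d - 1 := sub_nonneg.2 (by exact_mod_cast hd)
    have hV0 : 0 ≤ V := sum_nonneg fun _ _ => dist_nonneg
    have hηdL := mul_nonneg (mul_nonneg hη.le hd') (sq_nonneg L)
    positivity
  rw [hV]
  refine hregret.trans ((div_le_div_of_nonneg_right hlin hκ0.le).trans
    (sub_nonneg.1 (hslack.trans_eq ?_)))
  field_simp
  ring

/-- Dynamic regret bound for exact-gradient DOGD on L-Lipschitz quasar-convex losses
(Corollary 4.2(1)). -/
theorem dogd_exact_dynamic_regret_lipschitz
    (p T : ℕ) (hT : 1 ≤ T)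
    (X : Set (EuclideanSpace ℝ (Fin p)))
    (hXne : X.Nonempty) (hXclosed : IsClosed X) (hXconv : Convex ℝ X)
    (R : ℝ) (hR : 0 < R) (hXR : ∀ z ∈ X, ‖z‖ ≤ R)
    (f : ℕ → EuclideanSpace ℝ (Fin p) → ℝ)
    (hfdiff : ∀ t ∈ Finset.Icc 1 T, Differentiable ℝ (f t))
    (xs : ℕ → EuclideanSpace ℝ (Fin p))
    (hxs : ∀ t ∈ Finset.Icc 1 T, xs t ∈ X ∧ ∀ z ∈ X, f t (xs t) ≤ f t z)
    (κ : ℝ) (hκ0 : 0 < κ) (hκ1 : κ ≤ 1)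
    (hqc : ∀ t ∈ Finset.Icc 1 T, ∀ z ∈ X,
      f t z + (1/κ) * ⟪gradient (f t) z, xs t - z⟫ ≤ f t (xs t))
    (dl : ℕ → ℕ) (hdl : ∀ t ∈ Finset.Icc 1 T, 1 ≤ dl t)
    (d : ℕ) (hdub : ∀ t ∈ Finset.Icc 1 T, dl t ≤ d)
    (hdmem : ∃ t ∈ Finset.Icc 1 T, dl t = d)
    (x : ℕ → EuclideanSpace ℝ (Fin p))
    (η : ℝ) (hη : 0 < η)
    (hx1 : x 1 ∈ X)
    (hupd : ∀ t : ℕ, 1 ≤ t →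
      (((Finset.Icc 1 T).filter fun k => k + dl k - 1 = t).Nonempty →
        x (t+1) ∈ X ∧ ∀ z ∈ X,
          ‖x (t+1) - (x t - η • ∑ k ∈ (Finset.Icc 1 T).filter
              (fun k => k + dl k - 1 = t), gradient (f k) (x k))‖ ≤
          ‖z - (x t - η • ∑ k ∈ (Finset.Icc 1 T).filter
              (fun k => k + dl k - 1 = t), gradient (f k) (x k))‖) ∧
      (¬ ((Finset.Icc 1 T).filter fun k => k + dl k - 1 = t).Nonempty →
        x (t+1) = x t))
    (L : ℝ) (hL : ∀ t ∈ Finset.Icc 1 T, ∀ z ∈ X, ‖gradient (f t) z‖ ≤ L) :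
    ∑ t ∈ Finset.Icc 1 T, (f t (x t) - f t (xs t)) ≤
      2 * R^2 / (η * κ)
      + 3 * R * (∑ t ∈ Finset.Icc 1 (T - 1), ‖xs (t+1) - xs t‖) / (η * κ)
      + η * L^2 * (T : ℝ) * (d : ℝ) / (2 * κ)
      + L * ((d : ℝ) - 1) * (∑ t ∈ Finset.Icc 1 (T - 1), ‖xs (t+1) - xs t‖) / κ
      + 2 * η * ((d : ℝ) - 1) * L^2 * (T : ℝ) / κ :=
  dogd_exact_dynamic_regret_lipschitz_general p T hT X hXconv R hR hXR f xs hxs κ hκ0 hqc dl hdl d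
    hdub x η hη hx1 hupd L hL
end

section
/- Let R > 0, p, m ≥ 1, let a₁, …, a_m ∈ ℝ^p with ‖a_i‖ ≤ 1 for all i, let X = {x ∈ ℝ^p : ‖x‖ ≤ R}, let x* ∈ X, let σ(α) = e^α/(1 + e^α) be the logistic function, set b_i = σ(⟨a_i, x*⟩), and define f(x) = (1/(2m)) Σ_{i=1}^m (σ(⟨a_i, x⟩) − b_i)². Then, with κ = min(1, 8σ′(R)), f is κ-quasar-convex on X with respect to x*: f(x*) ≥ f(x) + (1/κ)⟨∇f(x), x* − x⟩ for all x ∈ X. -/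
/-!
Write `u i = σ ⟪a i, x⟫ - σ ⟪a i, x*⟫`. Since σ is monotone and `1/4`-Lipschitz,
`4 (u i)² ≤ u i * ⟪a i, x - x*⟫`, and on the ball `σ′ ⟪a i, x⟫ ≥ σ′ R` because σ′ is even and
decreasing in `|α|`. So the `i`-th term of `⟪∇f x, x* - x⟫` is at most `-8 σ′ R (u i)² / (2m)`,
which is at most `-κ` times the `i`-th term of `f x`, while `f x* = 0`.
-/

open Real RealInnerProductSpace
open scoped NNReal

namespace Real

lemma sigmoid_eq_exp_div (x : ℝ) : sigmoid x = exp x / (1 + exp x) := by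
  rw [sigmoid_def, exp_neg]
  field_simp
  ring

lemma sigmoid_mul_one_sub_pos (x : ℝ) : 0 < sigmoid x * (1 - sigmoid x) :=
  mul_pos (sigmoid_pos x) (sub_pos.2 (sigmoid_lt_one x))

lemma sigmoid_mul_one_sub_le (x : ℝ) : sigmoid x * (1 - sigmoid x) ≤ 4⁻¹ := by
  nlinarith [sq_nonneg (sigmoid x - 2⁻¹)]

lemma lipschitzWith_sigmoid : LipschitzWith 4⁻¹ sigmoid :=
  lipschitzWith_of_nnnorm_deriv_le differentiable_sigmoid fun x => by
    rw [← NNReal.coe_le_coe, coe_nnnorm, deriv_sigmoid, Real.norm_eq_abs,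
      abs_of_pos (sigmoid_mul_one_sub_pos x)]
    simpa using sigmoid_mul_one_sub_le x

lemma sigmoid_mul_one_sub_abs (x : ℝ) :
    sigmoid |x| * (1 - sigmoid |x|) = sigmoid x * (1 - sigmoid x) := by
  rcases abs_choice x with h | h <;> rw [h]
  rw [sigmoid_neg]
  ring

lemma sigmoid_mul_one_sub_le_of_abs_le {x R : ℝ} (h : |x| ≤ R) :
    sigmoid R * (1 - sigmoid R) ≤ sigmoid x * (1 - sigmoid x) := by
  have half_le : 2⁻¹ ≤ sigmoid |x| := sigmoid_zero ▸ sigmoid_le (abs_nonneg x)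
  have mono : sigmoid |x| ≤ sigmoid R := sigmoid_le h
  rw [← sigmoid_mul_one_sub_abs x]
  nlinarith

end Real

lemma Monotone.sub_mul_sub_nonneg {g : ℝ → ℝ} (hg : Monotone g) (s t : ℝ) :
    0 ≤ (g t - g s) * (t - s) := by
  rcases le_total s t with h | h
  · exact mul_nonneg (sub_nonneg.2 (hg h)) (sub_nonneg.2 h)
  · exact mul_nonneg_of_nonpos_of_nonpos (sub_nonpos.2 (hg h)) (sub_nonpos.2 h)

lemma Monotone.sq_sub_le_mul_of_lipschitzWith {g : ℝ → ℝ} {L : ℝ≥0} (hg : Monotone g)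
    (hL : LipschitzWith L g) (s t : ℝ) :
    (g t - g s) ^ 2 ≤ L * ((g t - g s) * (t - s)) := by
  have hlip : |g t - g s| ≤ L * |t - s| := by
    simpa only [Real.dist_eq] using hL.dist_le_mul t s
  calc (g t - g s) ^ 2 = |g t - g s| * |g t - g s| := by rw [abs_mul_abs_self, sq]
    _ ≤ |g t - g s| * (L * |t - s|) := by gcongr
    _ = L * |(g t - g s) * (t - s)| := by rw [abs_mul]; ring
    _ = L * ((g t - g s) * (t - s)) := by rw [abs_of_nonneg (hg.sub_mul_sub_nonneg s t)]

section GLM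

variable {E : Type*} [NormedAddCommGroup E] [InnerProductSpace ℝ E] {ι : Type*} [Fintype ι]

lemma hasFDerivAt_mul_sum_sq_comp_inner {g g' : ℝ → ℝ} (hg : ∀ t, HasDerivAt g (g' t) t)
    (a : ι → E) (b : ι → ℝ) (c : ℝ) (x : E) :
    HasFDerivAt (fun z => c * ∑ i, (g ⟪a i, z⟫ - b i) ^ 2)
      (c • ∑ i, (2 * (g ⟪a i, x⟫ - b i) * g' ⟪a i, x⟫) • innerSL ℝ (a i)) x := by
  refine HasFDerivAt.const_mul (HasFDerivAt.fun_sum fun i _ => ?_) c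
  have hinner := (innerSL ℝ (a i)).hasFDerivAt (x := x)
  refine ((((hg _).comp_hasFDerivAt x hinner).sub_const (b i)).pow 2).congr_fderiv ?_
  ext v
  simp
  ring

theorem quasarConvex_mul_sum_sq_comp_inner [CompleteSpace E] {g g' : ℝ → ℝ} {L : ℝ≥0}
    {κ c : ℝ} (hg : ∀ t, HasDerivAt g (g' t) t) (hmono : Monotone g)
    (hlip : LipschitzWith L g) (a : ι → E) (xstar x : E) (b : ι → ℝ)
    (hb : ∀ i, b i = g ⟪a i, xstar⟫) (f : E → ℝ)
    (hf : ∀ z, f z = c * ∑ i, (g ⟪a i, z⟫ - b i) ^ 2) (hc : 0 ≤ c) (hκ : 0 < κ)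
    (hκL : ∀ i, κ * L ≤ 2 * g' ⟪a i, x⟫) :
    f x + (1 / κ) * ⟪gradient f x, xstar - x⟫ ≤ f xstar := by
  rw [show f = _ from funext hf, inner_gradient_left,
    (hasFDerivAt_mul_sum_sq_comp_inner hg a b c x).fderiv]
  simp only [smul_apply, sum_apply, smul_eq_mul, innerSL_apply_apply, inner_sub_right, hb,
    sub_self]
  have term_nonpos : ∀ i, (g ⟪a i, x⟫ - g ⟪a i, xstar⟫) ^ 2 + 1 / κ *
      (2 * (g ⟪a i, x⟫ - g ⟪a i, xstar⟫) * g' ⟪a i, x⟫ * (⟪a i, xstar⟫ - ⟪a i, x⟫)) ≤ 0 := by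
    intro i
    set t := ⟪a i, x⟫
    set s := ⟪a i, xstar⟫
    have hw := hmono.sub_mul_sub_nonneg s t
    have key : κ * (g t - g s) ^ 2 ≤ 2 * g' t * ((g t - g s) * (t - s)) :=
      calc κ * (g t - g s) ^ 2 ≤ κ * L * ((g t - g s) * (t - s)) := by
            rw [mul_assoc]; gcongr; exact hmono.sq_sub_le_mul_of_lipschitzWith hlip s t
        _ ≤ 2 * g' t * ((g t - g s) * (t - s)) := mul_le_mul_of_nonneg_right (hκL i) hw
    rw [← mul_le_mul_iff_of_pos_left hκ, mul_zero, mul_add, ← mul_assoc, mul_one_div_cancel hκ.ne',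
      one_mul]
    linarith
  calc _ = c * ∑ i, ((g ⟪a i, x⟫ - g ⟪a i, xstar⟫) ^ 2 + 1 / κ *
        (2 * (g ⟪a i, x⟫ - g ⟪a i, xstar⟫) * g' ⟪a i, x⟫ * (⟪a i, xstar⟫ - ⟪a i, x⟫))) := by
        rw [Finset.sum_add_distrib, ← Finset.mul_sum]; ring
    _ ≤ 0 := mul_nonpos_of_nonneg_of_nonpos hc (Finset.sum_nonpos fun i _ => term_nonpos i)
    _ = _ := by simp

end GLM

theorem glm_logistic_quasar_convex_general
    (R : ℝ)
    (p m : ℕ)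
    (a : Fin m → EuclideanSpace ℝ (Fin p)) (ha : ∀ i, ‖a i‖ ≤ 1)
    (X : Set (EuclideanSpace ℝ (Fin p)))
    (hX : X = {x : EuclideanSpace ℝ (Fin p) | ‖x‖ ≤ R})
    (xstar : EuclideanSpace ℝ (Fin p))
    (σ : ℝ → ℝ) (hσ : ∀ α : ℝ, σ α = Real.exp α / (1 + Real.exp α))
    (b : Fin m → ℝ) (hb : ∀ i, b i = σ ⟪a i, xstar⟫)
    (f : EuclideanSpace ℝ (Fin p) → ℝ)
    (hf : ∀ z, f z = (1 / (2 * (m : ℝ))) * ∑ i : Fin m, (σ ⟪a i, z⟫ - b i)^2)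
    (κ : ℝ) (hκ : κ = min 1 (8 * deriv σ R)) :
    ∀ x ∈ X, f x + (1/κ) * ⟪gradient f x, xstar - x⟫ ≤ f xstar := by
  intro x hx
  obtain rfl : σ = sigmoid := funext fun α => (hσ α).trans (sigmoid_eq_exp_div α).symm
  rw [deriv_sigmoid] at hκ
  have hx : ‖x‖ ≤ R := by rwa [hX] at hx
  have inner_le : ∀ i, |⟪a i, x⟫| ≤ R := fun i => calc
    |⟪a i, x⟫| ≤ ‖a i‖ * ‖x‖ := abs_real_inner_le_norm _ _
    _ ≤ 1 * R := by gcongr; exact ha i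
    _ = R := one_mul R
  refine quasarConvex_mul_sum_sq_comp_inner hasDerivAt_sigmoid sigmoid_monotone
    lipschitzWith_sigmoid a xstar x b hb f hf (by positivity) ?_ fun i => ?_
  · rw [hκ]
    exact lt_min one_pos (by linarith [sigmoid_mul_one_sub_pos R])
  · calc κ * ((4⁻¹ : ℝ≥0) : ℝ) ≤ 8 * (sigmoid R * (1 - sigmoid R)) * 4⁻¹ := by
          rw [hκ]; push_cast; gcongr; exact min_le_right _ _
      _ ≤ 2 * (sigmoid ⟪a i, x⟫ * (1 - sigmoid ⟪a i, x⟫)) := by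
          linarith [sigmoid_mul_one_sub_le_of_abs_le (inner_le i)]

/-- The GLM loss with logistic link σ and realizable labels b_i = σ(⟨a_i, x*⟩), with
‖a_i‖ ≤ 1 and over the ball X = {‖x‖ ≤ R}, is κ-quasar-convex with respect to x*
with κ = min(1, 8σ′(R)). -/
theorem glm_logistic_quasar_convex
    (R : ℝ) (hR : 0 < R)
    (p m : ℕ) (hp : 1 ≤ p) [NeZero m]
    (a : Fin m → EuclideanSpace ℝ (Fin p)) (ha : ∀ i, ‖a i‖ ≤ 1)
    (X : Set (EuclideanSpace ℝ (Fin p)))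
    (hX : X = {x : EuclideanSpace ℝ (Fin p) | ‖x‖ ≤ R})
    (xstar : EuclideanSpace ℝ (Fin p)) (hxstar : xstar ∈ X)
    (σ : ℝ → ℝ) (hσ : ∀ α : ℝ, σ α = Real.exp α / (1 + Real.exp α))
    (b : Fin m → ℝ) (hb : ∀ i, b i = σ ⟪a i, xstar⟫)
    (f : EuclideanSpace ℝ (Fin p) → ℝ)
    (hf : ∀ z, f z = (1 / (2 * (m : ℝ))) * ∑ i : Fin m, (σ ⟪a i, z⟫ - b i)^2)
    (κ : ℝ) (hκ : κ = min 1 (8 * deriv σ R)) :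
    ∀ x ∈ X, f x + (1/κ) * ⟪gradient f x, xstar - x⟫ ≤ f xstar :=
  glm_logistic_quasar_convex_general R p m a ha X hX xstar σ hσ b hb f hf κ hκ
end

section
/- Let p ≥ 1, m₁, m₂ ≥ 0, a₁,…,a_p ∈ [0, m₁], b₁,…,b_p ∈ [−m₂, m₂]. Define g(t) = t²/(1+t²) for t ∈ ℝ and q(u) = Σ_{i=1}^p a_i sin²(b_i u_i) for u ∈ ℝ^p, and define f : ℝ^p → ℝ by f(x) = g(‖x‖) q(x/‖x‖) for x ≠ 0 and f(0) = 0. Then for every x ≠ 0, ‖∇f(x)‖ ≤ m₁ p + m₁ m₂ √p; i.e., f is Lipschitz continuous with constant m₁ p + m₁ m₂ √p on ℝ^p \ {0}. -/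
/-!
Write r = ‖x‖ and u = x / r. The derivative of y ↦ y / ‖y‖ at x is P / r, where P is the
orthogonal projection onto x^⊥, so the product rule gives
∇f(x) = g′(r) q(u) u + (g(r) / r) P ∇q(u).
Then |g′| ≤ 1, g(r) / r ≤ 1, |q| ≤ m₁ p and ‖∇q‖ ≤ m₁ m₂ √p give the bound.
-/

open Real InnerProductSpace

section RadialAngular

variable {E : Type*} [NormedAddCommGroup E] [InnerProductSpace ℝ E] [CompleteSpace E] {x : E}

theorem hasGradientAt_norm (hx : x ≠ 0) : HasGradientAt (‖·‖) (‖x‖⁻¹ • x) x := by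
  have hsq := (hasStrictFDerivAt_norm_sq x).hasFDerivAt.sqrt (by positivity)
  simp only [sqrt_sq (norm_nonneg _)] at hsq
  refine hsq.congr_fderiv (ContinuousLinearMap.ext fun v => ?_)
  simp only [one_div, mul_inv_rev, smul_apply, coe_innerSL_apply, nsmul_eq_mul, Nat.cast_ofNat,
    smul_eq_mul, map_smul, toDual_apply_apply]
  field_simp

theorem hasFDerivAt_inv_norm_smul (hx : x ≠ 0) :
    HasFDerivAt (fun y : E => ‖y‖⁻¹ • y) (‖x‖⁻¹ • (ℝ ∙ x)ᗮ.starProjection) x := by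
  refine (((hasDerivAt_inv (norm_ne_zero_iff.mpr hx)).comp_hasFDerivAt x
    (hasGradientAt_norm hx)).smul (hasFDerivAt_id x)).congr_fderiv
    (ContinuousLinearMap.ext fun v => ?_)
  simp only [Function.comp_apply, map_smul, smul_smul, neg_mul, neg_smul, id_eq, add_apply,
    smul_apply, ContinuousLinearMap.id_apply, ContinuousLinearMap.smulRight_apply, neg_apply,
    toDual_apply_apply, smul_eq_mul, Submodule.starProjection_orthogonal_val,
    Submodule.starProjection_singleton, ringHom_apply, smul_sub]
  rw [← sub_eq_add_neg]
  congr 2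
  ring

theorem hasGradientAt_comp_norm_mul_comp_inv_norm_smul {φ : ℝ → ℝ} {φ' : ℝ} {ψ : E → ℝ}
    {ψ' : E} (hx : x ≠ 0) (hφ : HasDerivAt φ φ' ‖x‖) (hψ : HasGradientAt ψ ψ' (‖x‖⁻¹ • x)) :
    HasGradientAt (fun y => φ ‖y‖ * ψ (‖y‖⁻¹ • y))
      ((φ' * ψ (‖x‖⁻¹ • x)) • (‖x‖⁻¹ • x) + (φ ‖x‖ / ‖x‖) • (ℝ ∙ x)ᗮ.starProjection ψ') x := by
  refine ((hφ.comp_hasFDerivAt x (hasGradientAt_norm hx)).mul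
    (hψ.hasFDerivAt.comp (f := fun y : E => ‖y‖⁻¹ • y) x
      (hasFDerivAt_inv_norm_smul hx))).congr_fderiv (ContinuousLinearMap.ext fun v => ?_)
  simp only [Function.comp_apply, ContinuousLinearMap.comp_smulₛₗ, map_inv₀, ringHom_apply,
    add_apply, smul_apply, ContinuousLinearMap.comp_apply, toDual_apply_apply, smul_eq_mul,
    map_smul, inner_add_left, real_inner_smul_left, Submodule.inner_starProjection_left_eq_right]
  ring

theorem norm_gradient_comp_norm_mul_comp_inv_norm_smul_le {φ : ℝ → ℝ} {φ' : ℝ} {ψ : E → ℝ}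
    {ψ' : E} (hx : x ≠ 0) (hφ : HasDerivAt φ φ' ‖x‖) (hψ : HasGradientAt ψ ψ' (‖x‖⁻¹ • x)) :
    ‖gradient (fun y => φ ‖y‖ * ψ (‖y‖⁻¹ • y)) x‖ ≤
      |φ'| * |ψ (‖x‖⁻¹ • x)| + |φ ‖x‖| / ‖x‖ * ‖ψ'‖ := by
  have hu : ‖‖x‖⁻¹ • x‖ = 1 := norm_smul_inv_norm hx
  rw [(hasGradientAt_comp_norm_mul_comp_inv_norm_smul hx hφ hψ).gradient]
  refine (norm_add_le _ _).trans ?_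
  rw [norm_smul (φ' * _), norm_smul (φ ‖x‖ / ‖x‖), hu, norm_eq_abs, norm_eq_abs, abs_mul,
    abs_div, abs_norm, mul_one]
  gcongr
  exact Submodule.norm_starProjection_apply_le _ _

end RadialAngular

theorem hasDerivAt_sq_div_one_add_sq (t : ℝ) :
    HasDerivAt (fun s : ℝ => s ^ 2 / (1 + s ^ 2)) (2 * t / (1 + t ^ 2) ^ 2) t := by
  refine ((hasDerivAt_pow 2 t).div ((hasDerivAt_pow 2 t).const_add 1)
    (by positivity)).congr_deriv ?_
  field_simp
  ring

theorem abs_two_mul_div_one_add_sq_sq_le_one (t : ℝ) : |2 * t / (1 + t ^ 2) ^ 2| ≤ 1 := by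
  rw [abs_div, abs_of_pos (by positivity : (0 : ℝ) < (1 + t ^ 2) ^ 2),
    div_le_one (by positivity), abs_mul, abs_two]
  nlinarith [sq_nonneg (|t| - 1), sq_abs t]

theorem abs_sq_div_one_add_sq_div_le_one (t : ℝ) : |t ^ 2 / (1 + t ^ 2)| / t ≤ 1 := by
  rw [abs_of_nonneg (by positivity)]
  rcases le_or_gt t 0 with ht | ht
  · exact (div_nonpos_of_nonneg_of_nonpos (by positivity) ht).trans zero_le_one
  · rw [div_le_one ht, div_le_iff₀ (by positivity)]
    nlinarith [sq_nonneg (t - 1)]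

section SinSquares

variable {ι : Type*} [Fintype ι]

theorem EuclideanSpace.norm_le_sqrt_card_mul {v : EuclideanSpace ℝ ι} {C : ℝ}
    (hv : ∀ i, |v i| ≤ C) : ‖v‖ ≤ √(Fintype.card ι) * C := by
  rcases isEmpty_or_nonempty ι with hι | ⟨⟨i₀⟩⟩
  · simp [Subsingleton.elim v 0]
  have hC : 0 ≤ C := (abs_nonneg _).trans (hv i₀)
  rw [EuclideanSpace.norm_eq, ← sqrt_sq hC, ← sqrt_mul (Nat.cast_nonneg _)]
  gcongr
  calc ∑ i, ‖v i‖ ^ 2 ≤ ∑ _i : ι, C ^ 2 := by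
        gcongr with i
        exact (norm_eq_abs _).trans_le (hv i)
    _ = Fintype.card ι * C ^ 2 := by simp

theorem hasGradientAt_sum_mul_sin_sq (a b : ι → ℝ) (u : EuclideanSpace ℝ ι) :
    HasGradientAt (fun u : EuclideanSpace ℝ ι => ∑ i, a i * sin (b i * u i) ^ 2)
      (WithLp.toLp 2 fun i => a i * b i * sin (2 * (b i * u i))) u := by
  have hterm : ∀ i, HasFDerivAt (fun u : EuclideanSpace ℝ ι => a i * sin (b i * u i) ^ 2)
      ((a i * b i * sin (2 * (b i * u i))) • EuclideanSpace.proj (𝕜 := ℝ) i) u := fun i =>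
    ((((EuclideanSpace.proj (𝕜 := ℝ) i).hasFDerivAt (x := u)).const_mul (b i)).sin.pow 2
      |>.const_mul (a i)).congr_fderiv (ContinuousLinearMap.ext fun v => by
        simp only [PiLp.proj_apply, Nat.add_one_sub_one, pow_one, nsmul_eq_mul, Nat.cast_ofNat,
          smul_apply, smul_eq_mul, sin_two_mul]
        ring)
  refine (HasFDerivAt.fun_sum fun i _ => hterm i).congr_fderiv
    (ContinuousLinearMap.ext fun v => ?_)
  simp [PiLp.inner_apply, mul_comm]

theorem abs_sum_mul_sin_sq_le {a : ι → ℝ} {m : ℝ} (ha : ∀ i, a i ∈ Set.Icc 0 m) (b u : ι → ℝ) :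
    |∑ i, a i * sin (b i * u i) ^ 2| ≤ m * Fintype.card ι := by
  rw [abs_of_nonneg (Finset.sum_nonneg fun i _ => mul_nonneg (ha i).1 (sq_nonneg _))]
  calc ∑ i, a i * sin (b i * u i) ^ 2 ≤ ∑ _i : ι, m := Finset.sum_le_sum fun i _ =>
        (mul_le_of_le_one_right (ha i).1 (sin_sq_le_one _)).trans (ha i).2
    _ = m * Fintype.card ι := by simp [mul_comm]

theorem norm_toLp_mul_mul_sin_le {a b : ι → ℝ} {m₁ m₂ : ℝ} (ha : ∀ i, a i ∈ Set.Icc 0 m₁)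
    (hb : ∀ i, b i ∈ Set.Icc (-m₂) m₂) (u : ι → ℝ) :
    ‖(WithLp.toLp 2 fun i => a i * b i * sin (2 * (b i * u i)) : EuclideanSpace ℝ ι)‖ ≤
      m₁ * m₂ * √(Fintype.card ι) := by
  rw [mul_comm _ √_]
  refine EuclideanSpace.norm_le_sqrt_card_mul fun i => ?_
  have hb' : |b i| ≤ m₂ := abs_le.mpr (hb i)
  have hm₁ : 0 ≤ m₁ := (ha i).1.trans (ha i).2
  rw [abs_mul, abs_mul, abs_of_nonneg (ha i).1, ← mul_one (m₁ * m₂)]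
  exact mul_le_mul (mul_le_mul (ha i).2 hb' (abs_nonneg _) hm₁) (abs_sin_le_one _)
    (abs_nonneg _) (mul_nonneg hm₁ ((abs_nonneg _).trans hb'))

end SinSquares

theorem spherical_example_gradient_bound_general
    (p : ℕ) (m₁ m₂ : ℝ)
    (a b : Fin p → ℝ)
    (ha : ∀ i, a i ∈ Set.Icc (0:ℝ) m₁) (hb : ∀ i, b i ∈ Set.Icc (-m₂) m₂)
    (g : ℝ → ℝ) (hg : ∀ t, g t = t^2 / (1 + t^2))
    (q : EuclideanSpace ℝ (Fin p) → ℝ)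
    (hq : ∀ u, q u = ∑ i : Fin p, a i * (Real.sin (b i * u i))^2)
    (f : EuclideanSpace ℝ (Fin p) → ℝ)
    (hf : ∀ x : EuclideanSpace ℝ (Fin p), x ≠ 0 → f x = g ‖x‖ * q (‖x‖⁻¹ • x)) :
    ∀ x : EuclideanSpace ℝ (Fin p), x ≠ 0 →
      ‖gradient f x‖ ≤ m₁ * p + m₁ * m₂ * Real.sqrt p := by
  intro x hx
  have hfx : f =ᶠ[nhds x] fun y => g ‖y‖ * q (‖y‖⁻¹ • y) :=
    eventually_ne_nhds hx |>.mono hf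
  obtain rfl : g = fun t => t ^ 2 / (1 + t ^ 2) := funext hg
  obtain rfl : q = fun u => ∑ i, a i * sin (b i * u i) ^ 2 := funext hq
  have hgrad := norm_gradient_comp_norm_mul_comp_inv_norm_smul_le hx
    (hasDerivAt_sq_div_one_add_sq ‖x‖) (hasGradientAt_sum_mul_sin_sq a b (‖x‖⁻¹ • x))
  calc ‖gradient f x‖ ≤ _ := hfx.gradient_eq ▸ hgrad
    _ ≤ 1 * (m₁ * p) + 1 * (m₁ * m₂ * √p) := add_le_add
        (mul_le_mul (abs_two_mul_div_one_add_sq_sq_le_one _)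
          (by simpa using abs_sum_mul_sin_sq_le ha b _) (abs_nonneg _) zero_le_one)
        (mul_le_mul (abs_sq_div_one_add_sq_div_le_one _)
          (by simpa using norm_toLp_mul_mul_sin_le ha hb _) (norm_nonneg _) zero_le_one)
    _ = m₁ * p + m₁ * m₂ * √p := by ring

/-- The highly non-convex quasar-convex example f(x) = g(‖x‖)·q(x/‖x‖), with
g(t) = t²/(1+t²) and q(u) = Σᵢ aᵢ sin²(bᵢ uᵢ), has gradient bounded by
m₁p + m₁m₂√p away from the origin; i.e. f is Lipschitz with that constant on ℝ^p∖{0}. -/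
theorem spherical_example_gradient_bound
    (p : ℕ) (hp : 1 ≤ p) (m₁ m₂ : ℝ) (hm₁ : 0 ≤ m₁) (hm₂ : 0 ≤ m₂)
    (a b : Fin p → ℝ)
    (ha : ∀ i, a i ∈ Set.Icc (0:ℝ) m₁) (hb : ∀ i, b i ∈ Set.Icc (-m₂) m₂)
    (g : ℝ → ℝ) (hg : ∀ t, g t = t^2 / (1 + t^2))
    (q : EuclideanSpace ℝ (Fin p) → ℝ)
    (hq : ∀ u, q u = ∑ i : Fin p, a i * (Real.sin (b i * u i))^2)
    (f : EuclideanSpace ℝ (Fin p) → ℝ)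
    (hf0 : f 0 = 0)
    (hf : ∀ x : EuclideanSpace ℝ (Fin p), x ≠ 0 → f x = g ‖x‖ * q (‖x‖⁻¹ • x)) :
    ∀ x : EuclideanSpace ℝ (Fin p), x ≠ 0 →
      ‖gradient f x‖ ≤ m₁ * p + m₁ * m₂ * Real.sqrt p :=
  spherical_example_gradient_bound_general p m₁ m₂ a b ha hb g hg q hq f hf
end
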